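/- For n ≥ 1, the path P_n satisfies τ(P_n) = 3n²/4 − n/2 if n is even, and τ(P_n) = 3n²/4 − n/2 − 1/4 if n is odd; equivalently, τ(P_n) = ⌊(3n² − 2n)/4⌋. -/
import Mathlib


open SimpleGraph Finset

/-- The eccentricity of a vertex `v` in a graph `G`: the maximum distance from `v`
to any vertex of `G`. -/
noncomputable def ecc {V : Type} [Fintype V] (G : SimpleGraph V) (v : V) : ℕ :=
  Finset.univ.sup fun w => G.dist v w

/-- The total-eccentricity index `τ(G) = ∑_{v ∈ V(G)} e_G(v)`. -/
noncomputable def totalEcc {V : Type} [Fintype V] (G : SimpleGraph V) : ℕ :=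
  ∑ v : V, ecc G v

lemma walk_len_lb {n : ℕ} {u v : Fin n} (p : (pathGraph n).Walk u v) :
    (u : ℕ) ≤ v + p.length ∧ (v : ℕ) ≤ u + p.length := by
  induction p with
  | nil => simp
  | cons h q ih =>
    rw [pathGraph_adj] at h
    simp only [SimpleGraph.Walk.length_cons]
    omega

lemma dist_ub {m : ℕ} : ∀ (k a : ℕ) (h : a + k < m + 1),
    (pathGraph (m + 1)).dist ⟨a, by omega⟩ ⟨a + k, h⟩ ≤ k := by
  intro k
  induction k with
  | zero => intro a h; simp
  | succ k ih =>
    intro a h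
    have hadj : (pathGraph (m + 1)).Adj ⟨a, by omega⟩ ⟨a + 1, by omega⟩ := by
      rw [pathGraph_adj]; left; rfl
    calc (pathGraph (m + 1)).dist ⟨a, by omega⟩ ⟨a + (k+1), h⟩
        ≤ (pathGraph (m + 1)).dist ⟨a, by omega⟩ ⟨a + 1, by omega⟩ +
          (pathGraph (m + 1)).dist ⟨a + 1, by omega⟩ ⟨a + (k+1), h⟩ :=
            (pathGraph_connected m).dist_triangle
      _ ≤ 1 + k := by
          have h1 : (pathGraph (m + 1)).dist ⟨a, by omega⟩ ⟨a + 1, by omega⟩ = 1 :=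
            (SimpleGraph.dist_eq_one_iff_adj).mpr hadj
          have h2 : (pathGraph (m + 1)).dist ⟨a + 1, by omega⟩ ⟨a + 1 + k, by omega⟩ ≤ k :=
            ih (a + 1) (by omega)
          have he : (⟨a + 1 + k, by omega⟩ : Fin (m + 1)) = ⟨a + (k+1), h⟩ :=
            Fin.mk_eq_mk.mpr (by omega)
          rw [he] at h2
          omega
      _ = k + 1 := by omega

lemma pathGraph_dist {n : ℕ} (u v : Fin n) :
    (pathGraph n).dist u v = max u.val v.val - min u.val v.val := by
  have hn : 0 < n := u.pos
  obtain ⟨m, rfl⟩ : ∃ m, n = m + 1 := ⟨n - 1, by omega⟩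
  apply le_antisymm
  · rcases le_total u.val v.val with hle | hle
    · have := dist_ub (m := m) (v.val - u.val) u.val (by omega)
      have he : (⟨u.val + (v.val - u.val), by omega⟩ : Fin (m+1)) = v := by
        apply Fin.ext; simp only [Fin.val_mk]; omega
      have he2 : (⟨u.val, by omega⟩ : Fin (m+1)) = u := by apply Fin.ext; rfl
      rw [he, he2] at this
      omega
    · have := dist_ub (m := m) (u.val - v.val) v.val (by omega)
      have he : (⟨v.val + (u.val - v.val), by omega⟩ : Fin (m+1)) = u := by
        apply Fin.ext; simp only [Fin.val_mk]; omega
      have he2 : (⟨v.val, by omega⟩ : Fin (m+1)) = v := by apply Fin.ext; rfl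
      rw [he, he2] at this
      rw [SimpleGraph.dist_comm]
      omega
  · have hr : (pathGraph (m+1)).Reachable u v := (pathGraph_connected m).preconnected u v
    obtain ⟨p, hp⟩ := hr.exists_walk_length_eq_dist
    have := walk_len_lb p
    omega

lemma ecc_pathGraph {n : ℕ} (hn : 1 ≤ n) (v : Fin n) :
    ecc (pathGraph n) v = max v.val (n - 1 - v.val) := by
  apply le_antisymm
  · apply Finset.sup_le
    intro w _
    rw [pathGraph_dist]
    have := w.isLt
    have := v.isLt
    omega
  · have hv := v.isLt
    rcases le_total (2 * v.val) (n - 1) with h | h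
    · have hd : (pathGraph n).dist v ⟨n - 1, by omega⟩ = max v.val (n - 1 - v.val) := by
        rw [pathGraph_dist]
        simp only [Fin.val_mk]
        omega
      rw [← hd]
      exact Finset.le_sup (Finset.mem_univ _)
    · have hd : (pathGraph n).dist v ⟨0, by omega⟩ = max v.val (n - 1 - v.val) := by
        rw [pathGraph_dist]
        simp only [Fin.val_mk]
        omega
      rw [← hd]
      exact Finset.le_sup (Finset.mem_univ _)

lemma key_sum : ∀ n : ℕ, 4 * (∑ i ∈ Finset.range n, max i (n - 1 - i)) + n % 2 + 2 * n
    = 3 * n ^ 2 := by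
  intro n
  induction n with
  | zero => simp
  | succ n ih =>
    have hstep : ∀ i ∈ Finset.range n,
        max i (n + 1 - 1 - i) = max i (n - 1 - i) + (if 2 * i < n then 1 else 0) := by
      intro i hi
      rw [Finset.mem_range] at hi
      split_ifs <;> omega
    rw [Finset.sum_range_succ, Finset.sum_congr rfl hstep, Finset.sum_add_distrib]
    have hfil : Finset.filter (fun i => 2 * i < n) (Finset.range n)
        = Finset.range ((n + 1) / 2) := by
      ext i
      simp only [Finset.mem_filter, Finset.mem_range]
      omega
    have hcount : (∑ x ∈ Finset.range n, if 2 * x < n then 1 else 0) = (n + 1) / 2 := by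
      simp only [Finset.sum_boole, Nat.cast_id]
      rw [hfil, Finset.card_range]
    rw [hcount]
    have hexp : 3 * (n + 1) ^ 2 = 3 * n ^ 2 + 6 * n + 3 := by ring
    rw [hexp, ← ih]
    omega

/-- For `n ≥ 1`, the path `Pₙ` satisfies `τ(Pₙ) = 3n²/4 - n/2` if `n` is even and
`τ(Pₙ) = 3n²/4 - n/2 - 1/4` if `n` is odd; equivalently `τ(Pₙ) = ⌊(3n² - 2n)/4⌋`. -/
theorem totalEcc_path (n : ℕ) (hn : 1 ≤ n) :
    (Even n → (totalEcc (pathGraph n) : ℚ) = 3 * n ^ 2 / 4 - n / 2) ∧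
    (Odd n → (totalEcc (pathGraph n) : ℚ) = 3 * n ^ 2 / 4 - n / 2 - 1 / 4) ∧
    totalEcc (pathGraph n) = (3 * n ^ 2 - 2 * n) / 4 := by
  have htot : totalEcc (pathGraph n) = ∑ i ∈ Finset.range n, max i (n - 1 - i) := by
    rw [totalEcc, ← Fin.sum_univ_eq_sum_range]
    exact Finset.sum_congr rfl fun v _ => ecc_pathGraph hn v
  have hkey := key_sum n
  rw [htot]
  set S := ∑ i ∈ Finset.range n, max i (n - 1 - i) with hS
  refine ⟨?_, ?_, ?_⟩
  · intro he
    have h2 : n % 2 = 0 := Nat.even_iff.mp he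
    rw [h2] at hkey
    have hq : (4 : ℚ) * S + 0 + 2 * n = 3 * n ^ 2 := by exact_mod_cast hkey
    linarith
  · intro ho
    have h2 : n % 2 = 1 := Nat.odd_iff.mp ho
    rw [h2] at hkey
    have hq : (4 : ℚ) * S + 1 + 2 * n = 3 * n ^ 2 := by exact_mod_cast hkey
    linarith
  · omega
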